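/- Let W be a committee of size k (with k ≥ 1) and let X ⊆ N be a set of voters with |X| ≥ n/k such that no candidate of W is approved by any voter in X (i.e., W ∩ (⋃_{i∈X} A_i) = ∅). Then there exists a candidate w ∈ W with MC(w,W) ≤ n/k − n/k². -/

import Mathlib

/-!
Summing marginal contributions over the committee, each voter contributes in total
`k' · (H(k') - H(k' - 1)) = 1` if she approves `k' ≥ 1` members of `W`, and `0` otherwise.
Hence `∑_{w ∈ W} MC(w, W)` counts the voters approving some member of `W`, which excludes
all of `X`, so it is at most `n - n/k`; averaging over the `k` members gives the bound.
-/

open Finset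

noncomputable def Hval (p : ℕ) : ℝ := ∑ j ∈ Finset.range p, (1 : ℝ) / (j + 1)

noncomputable def pavScore {C : Type*} [DecidableEq C] {n : ℕ}
    (A : Fin n → Finset C) (W : Finset C) : ℝ :=
  ∑ i, Hval ((W ∩ A i).card)

noncomputable def mc {C : Type*} [DecidableEq C] {n : ℕ}
    (A : Fin n → Finset C) (w : C) (W : Finset C) : ℝ :=
  pavScore A W - pavScore A (W.erase w)

lemma Hval_succ (m : ℕ) : Hval (m + 1) = Hval m + 1 / (m + 1) := by
  simp [Hval, Finset.sum_range_succ]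

lemma sum_Hval_sub_Hval_erase {C : Type*} [DecidableEq C] {W S : Finset C} (hS : S ⊆ W) :
    ∑ w ∈ W, (Hval #S - Hval #(S.erase w)) = if S.Nonempty then 1 else 0 := by
  rw [← Finset.sum_subset hS fun w _ hw => by rw [Finset.erase_eq_of_notMem hw, sub_self]]
  obtain rfl | hne := S.eq_empty_or_nonempty
  · simp
  obtain ⟨m, hm⟩ : ∃ m, #S = m + 1 := Nat.exists_eq_add_one.mpr hne.card_pos
  have hterm : ∀ w ∈ S, Hval #S - Hval #(S.erase w) = 1 / (m + 1) := fun w hw => by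
    rw [Finset.card_erase_of_mem hw, hm, Nat.add_sub_cancel, Hval_succ, add_sub_cancel_left]
  rw [Finset.sum_congr rfl hterm, Finset.sum_const, hm, if_pos hne, nsmul_eq_mul]
  push_cast
  field_simp

section

variable {C : Type*} [DecidableEq C] {n : ℕ} (A : Fin n → Finset C) (W : Finset C)

lemma mc_eq_sum (w : C) :
    mc A w W = ∑ i, (Hval #(W ∩ A i) - Hval #((W ∩ A i).erase w)) := by
  simp only [mc, pavScore, ← Finset.sum_sub_distrib, Finset.erase_inter]

lemma sum_mc_eq_card_filter :
    ∑ w ∈ W, mc A w W = #{i | (W ∩ A i).Nonempty} := by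
  simp only [mc_eq_sum, Finset.sum_comm (s := W),
    sum_Hval_sub_Hval_erase Finset.inter_subset_left, Finset.sum_boole]

lemma sum_mc_le_of_disjoint {X : Finset (Fin n)} (hdisj : W ∩ X.biUnion A = ∅) :
    ∑ w ∈ W, mc A w W ≤ n - #X := by
  have hsub : ({i | (W ∩ A i).Nonempty} : Finset (Fin n)) ⊆ Xᶜ := by
    intro i hi
    rw [Finset.mem_compl]
    intro hiX
    obtain ⟨c, hc⟩ := (Finset.mem_filter.mp hi).2
    have : c ∈ W ∩ X.biUnion A :=
      Finset.inter_subset_inter_left (Finset.subset_biUnion_of_mem A hiX) hc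
    simp [hdisj] at this
  rw [sum_mc_eq_card_filter]
  calc ((#{i | (W ∩ A i).Nonempty} : ℕ) : ℝ) ≤ #Xᶜ := by exact_mod_cast Finset.card_le_card hsub
    _ = n - #X := by
      rw [Finset.card_compl, Fintype.card_fin, Nat.cast_sub (card_finset_fin_le X)]

end

theorem stmt16 {C : Type*} [DecidableEq C] {n k : ℕ}
    (A : Fin n → Finset C) (W : Finset C)
    (hk : 1 ≤ k) (hW : W.card = k)
    (X : Finset (Fin n)) (hX : (n : ℝ) / k ≤ (X.card : ℝ))
    (hdisj : W ∩ X.biUnion A = ∅) :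
    ∃ w ∈ W, mc A w W ≤ (n : ℝ) / k - (n : ℝ) / (k : ℝ) ^ 2 := by
  have hWne : W.Nonempty := Finset.card_pos.mp (by omega)
  have hk0 : (0 : ℝ) < k := by exact_mod_cast hk
  have hbound : (n : ℝ) / k - (n : ℝ) / (k : ℝ) ^ 2 = (n - n / k) / k := by field_simp
  have havg : ∑ w ∈ W, mc A w W ≤ ∑ _w ∈ W, ((n : ℝ) - n / k) / k := by
    rw [Finset.sum_const, hW, nsmul_eq_mul, mul_div_cancel₀ _ hk0.ne']
    linarith [sum_mc_le_of_disjoint A W hdisj]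
  obtain ⟨w, hw, hle⟩ := Finset.exists_le_of_sum_le hWne havg
  exact ⟨w, hw, hbound ▸ hle⟩
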